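/- arXiv:1501.04836 — 5 statements merged into one kernel-verified Lean document; each statement's English description precedes it below -/
import Mathlib

section
/- Let f ∈ ℤ[x₁,…,x_d] be a nonconstant polynomial with support {p₁,…,p_s} ⊆ ℕ^d and corresponding nonzero coefficients c₁,…,c_s. Suppose n ∈ ℝ^d and c ∈ ℝ satisfy n·p₁ − c ≥ 1 and n·p_i − c ≤ −1 for i ∈ {2,…,s}. Then there exists a₀ ∈ ℕ such that for all natural numbers a ≥ a₀: |c₁ · a^(n·p₁)| > |Σ_{i=2}^{s} c_i · a^(n·p_i)|. -/
/-- Lemma 4(i): for a nonconstant polynomial with support points `p i` and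
nonzero coefficients `c i`, if `(n, c)` solves the separation system with
margin 1, then for all sufficiently large naturals `a`, the monomial of `p 0`
dominates the sum of all the other monomials at the point `a^n`. -/
theorem stmt_5 {d s : ℕ} (hs : 1 ≤ s) (p : Fin s → Fin d → ℕ) (co : Fin s → ℤ)
    (hinj : Function.Injective p) (hco : ∀ i, co i ≠ 0)
    (hnonconst : ∃ i, p i ≠ 0)
    (n : Fin d → ℝ) (c : ℝ)
    (h1 : (∑ j, n j * (p ⟨0, hs⟩ j : ℝ)) - c ≥ 1)
    (h2 : ∀ i : Fin s, i ≠ ⟨0, hs⟩ → (∑ j, n j * (p i j : ℝ)) - c ≤ -1) :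
    ∃ a₀ : ℕ, ∀ a : ℕ, a₀ ≤ a →
      |(co ⟨0, hs⟩ : ℝ) * (a : ℝ) ^ (∑ j, n j * (p ⟨0, hs⟩ j : ℝ))| >
        |∑ i ∈ Finset.univ.filter (· ≠ (⟨0, hs⟩ : Fin s)),
            (co i : ℝ) * (a : ℝ) ^ (∑ j, n j * (p i j : ℝ))| := by
  classical
  set T := (Finset.univ.filter (· ≠ (⟨0, hs⟩ : Fin s)))
  set C : ℝ := ∑ i ∈ T, |(co i : ℝ)|
  refine ⟨⌈C⌉₊ + 1, fun a ha => ?_⟩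
  have ha1 : (1 : ℝ) ≤ (a : ℝ) := by
    have : 1 ≤ a := le_trans (Nat.le_add_left 1 _) ha
    exact_mod_cast this
  have hapos : (0 : ℝ) < (a : ℝ) := lt_of_lt_of_le one_pos ha1
  have haC : C < (a : ℝ) := by
    have : (⌈C⌉₊ : ℝ) < (a : ℝ) := by
      exact_mod_cast lt_of_lt_of_le (Nat.lt_succ_self _) ha
    exact lt_of_le_of_lt (Nat.le_ceil C) this
  -- RHS bound
  have hRHS : |∑ i ∈ T, (co i : ℝ) * (a : ℝ) ^ (∑ j, n j * (p i j : ℝ))|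
      ≤ C * (a : ℝ) ^ (c - 1) := by
    calc |∑ i ∈ T, (co i : ℝ) * (a : ℝ) ^ (∑ j, n j * (p i j : ℝ))|
        ≤ ∑ i ∈ T, |(co i : ℝ) * (a : ℝ) ^ (∑ j, n j * (p i j : ℝ))| :=
          Finset.abs_sum_le_sum_abs _ _
      _ ≤ ∑ i ∈ T, |(co i : ℝ)| * (a : ℝ) ^ (c - 1) := by
          refine Finset.sum_le_sum fun i hi => ?_
          rw [abs_mul, abs_of_pos (Real.rpow_pos_of_pos hapos _)]
          refine mul_le_mul_of_nonneg_left ?_ (abs_nonneg _)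
          refine Real.rpow_le_rpow_of_exponent_le ha1 ?_
          have := h2 i (Finset.mem_filter.mp hi).2
          linarith
      _ = C * (a : ℝ) ^ (c - 1) := by rw [Finset.sum_mul]
  have hc0 : (1 : ℝ) ≤ |(co ⟨0, hs⟩ : ℝ)| := by
    have : 1 ≤ |co ⟨0, hs⟩| := Int.one_le_abs (hco _)
    calc (1:ℝ) ≤ (|co ⟨0, hs⟩| : ℤ) := by exact_mod_cast this
      _ = |(co ⟨0, hs⟩ : ℝ)| := by push_cast; ring
  have hLHS : (a : ℝ) ^ (c + 1) ≤ |(co ⟨0, hs⟩ : ℝ) * (a : ℝ) ^ (∑ j, n j * (p ⟨0, hs⟩ j : ℝ))| := by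
    rw [abs_mul, abs_of_pos (Real.rpow_pos_of_pos hapos _)]
    calc (a : ℝ) ^ (c + 1) ≤ (a : ℝ) ^ (∑ j, n j * (p ⟨0, hs⟩ j : ℝ)) := by
          refine Real.rpow_le_rpow_of_exponent_le ha1 ?_; linarith
      _ ≤ |(co ⟨0, hs⟩ : ℝ)| * (a : ℝ) ^ (∑ j, n j * (p ⟨0, hs⟩ j : ℝ)) := by
          nlinarith [Real.rpow_pos_of_pos hapos (∑ j, n j * (p ⟨0, hs⟩ j : ℝ))]
  have key : C * (a : ℝ) ^ (c - 1) < (a : ℝ) ^ (c + 1) := by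
    have h1' : (a : ℝ) ^ (c + 1) = (a : ℝ) ^ (c - 1) * (a : ℝ) ^ (2:ℝ) := by
      rw [← Real.rpow_add hapos]; ring_nf
    have ha2 : (a : ℝ) ^ (2:ℝ) = (a:ℝ) * (a:ℝ) := by
      rw [show (2:ℝ) = (2:ℕ) by norm_num, Real.rpow_natCast]; ring
    have hp := Real.rpow_pos_of_pos hapos (c - 1)
    rw [h1', ha2]
    calc C * (a:ℝ) ^ (c-1) < (a:ℝ) * (a:ℝ)^(c-1) := by
          exact mul_lt_mul_of_pos_right haC hp
      _ ≤ (a:ℝ)^(c-1) * ((a:ℝ) * (a:ℝ)) := by nlinarith [mul_pos hapos hp, ha1]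
  calc |∑ i ∈ T, (co i : ℝ) * (a : ℝ) ^ (∑ j, n j * (p i j : ℝ))|
      ≤ C * (a : ℝ) ^ (c - 1) := hRHS
    _ < (a : ℝ) ^ (c + 1) := key
    _ ≤ _ := hLHS
end

section
/- Let f ∈ ℤ[x₁,…,x_d] be a nonconstant polynomial with support {p₁,…,p_s} and coefficients c₁,…,c_s. Suppose n ∈ ℝ^d and c ∈ ℝ satisfy n·p₁ − c ≥ 1 and n·p_i − c ≤ −1 for i ∈ {2,…,s}. Then there exists a₀ ∈ ℕ such that for all natural numbers a ≥ a₀, the sign of f evaluated at the point (a^{n₁}, …, a^{n_d}) equals the sign of c₁. -/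
/-!
The exponent `n · p₁` strictly exceeds every other exponent `n · pᵢ`, so as `a → ∞`
the term `c₁ a^(n·p₁)` dominates the rest of the sum, which then has the sign of `c₁`.
-/

open Filter Asymptotics

theorem Real.sign_add_of_abs_lt {x y : ℝ} (h : |y| < |x|) : Real.sign (x + y) = Real.sign x := by
  rcases lt_trichotomy x 0 with hx | rfl | hx
  · rw [abs_of_neg hx] at h
    rw [Real.sign_of_neg (by linarith [le_abs_self y]), Real.sign_of_neg hx]
  · rw [abs_zero] at h; exact absurd h (abs_nonneg y).not_gt
  · rw [abs_of_pos hx] at h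
    rw [Real.sign_of_pos (by linarith [neg_abs_le y]), Real.sign_of_pos hx]

theorem Real.sign_mul_of_pos {a x : ℝ} (hx : 0 < x) : Real.sign (a * x) = Real.sign a := by
  rcases lt_trichotomy a 0 with ha | rfl | ha
  · rw [Real.sign_of_neg (mul_neg_of_neg_of_pos ha hx), Real.sign_of_neg ha]
  · simp
  · rw [Real.sign_of_pos (mul_pos ha hx), Real.sign_of_pos ha]

theorem isLittleO_rpow_rpow_atTop {a b : ℝ} (hab : a < b) :
    (fun x : ℝ => x ^ a) =o[atTop] fun x => x ^ b := by
  rw [isLittleO_iff_tendsto' ((eventually_gt_atTop 0).mono fun x hx h =>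
    absurd h (Real.rpow_pos_of_pos hx b).ne')]
  refine (tendsto_rpow_neg_atTop (sub_pos.mpr hab)).congr' ?_
  filter_upwards [eventually_gt_atTop 0] with x hx
  rw [← Real.rpow_sub hx, neg_sub]

theorem eventually_sign_sum_rpow_eq {ι : Type*} [Fintype ι] [DecidableEq ι] (co E : ι → ℝ)
    {i₀ : ι} (hco : co i₀ ≠ 0) (hE : ∀ i ≠ i₀, E i < E i₀) :
    ∀ᶠ x in atTop, Real.sign (∑ i, co i * x ^ E i) = Real.sign (co i₀) := by
  have hrest : (fun x : ℝ => ∑ i ∈ Finset.univ.erase i₀, co i * x ^ E i) =o[atTop]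
      fun x => co i₀ * x ^ E i₀ :=
    (IsLittleO.fun_sum fun i hi =>
      (isLittleO_rpow_rpow_atTop (hE i (Finset.ne_of_mem_erase hi))).const_mul_left (co i))
      |>.trans_isBigO (isBigO_self_const_mul hco _ _)
  have hlead : ∀ᶠ x in atTop, 0 < ‖co i₀ * x ^ E i₀‖ :=
    (eventually_gt_atTop 0).mono fun x hx => norm_pos_iff.mpr
      (mul_ne_zero hco (Real.rpow_pos_of_pos hx _).ne')
  filter_upwards [hrest.eventuallyLT_norm_of_eventually_pos hlead, eventually_gt_atTop 0]
    with x hlt hx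
  rw [← Finset.add_sum_erase _ _ (Finset.mem_univ i₀), Real.sign_add_of_abs_lt hlt,
    Real.sign_mul_of_pos (Real.rpow_pos_of_pos hx _)]

theorem stmt_6_general {d s : ℕ} (hs : 1 ≤ s) (p : Fin s → Fin d → ℕ) (co : Fin s → ℤ)
    (hco : ∀ i, co i ≠ 0)
    (n : Fin d → ℝ) (c : ℝ)
    (h1 : (∑ j, n j * (p ⟨0, hs⟩ j : ℝ)) - c ≥ 1)
    (h2 : ∀ i : Fin s, i ≠ ⟨0, hs⟩ → (∑ j, n j * (p i j : ℝ)) - c ≤ -1) :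
    ∃ a₀ : ℕ, ∀ a : ℕ, a₀ ≤ a →
      Real.sign (∑ i, (co i : ℝ) * (a : ℝ) ^ (∑ j, n j * (p i j : ℝ))) =
        Real.sign ((co ⟨0, hs⟩ : ℝ)) := by
  have hdom : ∀ i ≠ ⟨0, hs⟩,
      ∑ j, n j * (p i j : ℝ) < ∑ j, n j * (p ⟨0, hs⟩ j : ℝ) :=
    fun i hi => by linarith [h2 i hi]
  have hreal := eventually_sign_sum_rpow_eq (fun i => (co i : ℝ)) _
    (Int.cast_ne_zero.mpr (hco ⟨0, hs⟩)) hdom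
  exact eventually_atTop.mp (tendsto_natCast_atTop_atTop.eventually hreal)

/-- Lemma 4(ii): under the separation hypotheses, for all sufficiently large
naturals `a`, the sign of `f(a^{n₁},…,a^{n_d}) = Σ_i c_i · a^(n·p_i)` equals
the sign of the coefficient `c 0`. -/
theorem stmt_6 {d s : ℕ} (hs : 1 ≤ s) (p : Fin s → Fin d → ℕ) (co : Fin s → ℤ)
    (hinj : Function.Injective p) (hco : ∀ i, co i ≠ 0)
    (hnonconst : ∃ i, p i ≠ 0)
    (n : Fin d → ℝ) (c : ℝ)
    (h1 : (∑ j, n j * (p ⟨0, hs⟩ j : ℝ)) - c ≥ 1)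
    (h2 : ∀ i : Fin s, i ≠ ⟨0, hs⟩ → (∑ j, n j * (p i j : ℝ)) - c ≤ -1) :
    ∃ a₀ : ℕ, ∀ a : ℕ, a₀ ≤ a →
      Real.sign (∑ i, (co i : ℝ) * (a : ℝ) ^ (∑ j, n j * (p i j : ℝ))) =
        Real.sign ((co ⟨0, hs⟩ : ℝ)) :=
  stmt_6_general hs p co hco n c h1 h2
end

section
/- Let f ∈ ℤ[x₁,…,x_d] and suppose there exists an exponent vector p in the support of f such that p ≠ 0, the coefficient of x^p in f is positive, and p can be strictly separated by a hyperplane from the rest of the support of f with the normal vector pointing toward p. Then there exists a point q ∈ (ℚ⁺)^d with all coordinates positive rational numbers such that f(q) > 0. -/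
open MvPolynomial

/-!
Perturb the separating normal `n` to an integer vector `m`: the admissible normals form an open
cone, which contains a rational point and hence, after clearing denominators, an integer one. Now
evaluate `f` at `q = (T ^ m₁, …, T ^ m_d)`: every monomial `x^a` becomes `T ^ ⟪m, a⟫`, the exponent
`⟪m, p⟫` is strictly largest, and once `T` exceeds the sum of the absolute values of the other
coefficients the term of `p` dominates all the others together.
-/

theorem zpow_sum₀ {K : Type*} [CommGroupWithZero K] {t : K} (ht : t ≠ 0) {ι : Type*}
    (s : Finset ι) (e : ι → ℤ) : t ^ (∑ i ∈ s, e i) = ∏ i ∈ s, t ^ e i := by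
  classical
  induction s using Finset.induction_on with
  | empty => simp
  | insert i s hi ih => rw [Finset.sum_insert hi, Finset.prod_insert hi, zpow_add₀ ht, ih]

theorem Rat.exists_pos_nat_mul_eq_intCast {ι : Type*} [Fintype ι] (r : ι → ℚ) :
    ∃ N : ℕ, 0 < N ∧ ∃ z : ι → ℤ, ∀ i, (z i : ℚ) = N * r i := by
  classical
  refine ⟨∏ i, (r i).den, Finset.prod_pos fun i _ => (r i).den_pos, ?_⟩
  choose k hk using fun i => Finset.dvd_prod_of_mem (fun j => (r j).den) (Finset.mem_univ i)
  refine ⟨fun i => k i * (r i).num, fun i => ?_⟩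
  rw [hk i]
  push_cast
  rw [← Rat.mul_den_eq_num]
  ring

theorem exists_intCast_mem_of_isOpen_of_nsmul_mem {ι : Type*} [Fintype ι] {U : Set (ι → ℝ)}
    (hU : IsOpen U) (hne : U.Nonempty) (hsmul : ∀ v ∈ U, ∀ N : ℕ, 0 < N → (N : ℝ) • v ∈ U) :
    ∃ m : ι → ℤ, (fun i => (m i : ℝ)) ∈ U := by
  obtain ⟨r, hrU⟩ :=
    (DenseRange.piMap fun _ => Rat.denseRange_cast (𝕜 := ℝ)).exists_mem_open hU hne
  obtain ⟨N, hN, z, hz⟩ := Rat.exists_pos_nat_mul_eq_intCast r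
  refine ⟨z, ?_⟩
  convert hsmul _ hrU N hN using 1
  ext i
  simpa using congrArg ((↑) : ℚ → ℝ) (hz i)

open Matrix in
theorem exists_int_dotProduct_lt {ι : Type*} [Fintype ι] {S : Set (ι → ℝ)} (hS : S.Finite)
    {p n : ι → ℝ} (h : ∀ a ∈ S, n ⬝ᵥ a < n ⬝ᵥ p) :
    ∃ m : ι → ℤ, ∀ a ∈ S, (fun i => (m i : ℝ)) ⬝ᵥ a < (fun i => (m i : ℝ)) ⬝ᵥ p := by
  refine exists_intCast_mem_of_isOpen_of_nsmul_mem (U := {v | ∀ a ∈ S, v ⬝ᵥ a < v ⬝ᵥ p})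
    ?_ ⟨n, h⟩ fun v hv N hN a ha => ?_
  · simp only [Set.ofPred_forall]
    refine hS.isOpen_biInter fun a _ => isOpen_lt ?_ ?_ <;>
      simp only [dotProduct] <;> fun_prop
  · simpa only [smul_dotProduct, smul_eq_mul] using
      mul_lt_mul_of_pos_left (hv a ha) (Nat.cast_pos.2 hN)

theorem eval₂_zpow_eq_sum {R K σ : Type*} [CommSemiring R] [Field K] [Fintype σ]
    (φ : R →+* K) (f : MvPolynomial σ R) {t : K} (ht : t ≠ 0) (m : σ → ℤ) :
    eval₂ φ (fun i => t ^ m i) f = ∑ a ∈ f.support, φ (f.coeff a) * t ^ (∑ i, m i * a i) := by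
  rw [eval₂_eq']
  refine Finset.sum_congr rfl fun a _ => ?_
  rw [zpow_sum₀ ht]
  congr 1
  refine Finset.prod_congr rfl fun i _ => ?_
  rw [← zpow_natCast, ← zpow_mul]

theorem sum_mul_zpow_pos_of_dominant {K α : Type*} [Field K] [LinearOrder K]
    [IsStrictOrderedRing K] [DecidableEq α] {s : Finset α} {w : α → K} {e : α → ℤ} {p : α}
    (hp : p ∈ s) (hwp : 1 ≤ w p) (he : ∀ a ∈ s, a ≠ p → e a < e p) {T : K} (hT : 1 ≤ T)
    (hTw : ∑ a ∈ s.erase p, |w a| < T) :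
    0 < ∑ a ∈ s, w a * T ^ e a := by
  have hT0 : 0 < T := one_pos.trans_le hT
  have hrest : |∑ a ∈ s.erase p, w a * T ^ e a| < T ^ e p :=
    calc |∑ a ∈ s.erase p, w a * T ^ e a|
        ≤ ∑ a ∈ s.erase p, |w a| * T ^ (e p - 1) := by
          refine (Finset.abs_sum_le_sum_abs _ _).trans (Finset.sum_le_sum fun a ha => ?_)
          obtain ⟨hap, has⟩ := Finset.mem_erase.1 ha
          rw [abs_mul, abs_of_pos (zpow_pos hT0 _)]
          gcongr
          linarith [he a has hap]
      _ = (∑ a ∈ s.erase p, |w a|) * T ^ (e p - 1) := (Finset.sum_mul ..).symm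
      _ < T * T ^ (e p - 1) := mul_lt_mul_of_pos_right hTw (zpow_pos hT0 _)
      _ = T ^ e p := by rw [← zpow_one_add₀ hT0.ne', add_sub_cancel]
  have hlead : T ^ e p ≤ w p * T ^ e p := le_mul_of_one_le_left (zpow_pos hT0 _).le hwp
  rw [← Finset.add_sum_erase _ _ hp]
  linarith [neg_abs_le (∑ a ∈ s.erase p, w a * T ^ e a)]

theorem stmt_7_general {d : ℕ} (f : MvPolynomial (Fin d) ℤ) (p : Fin d →₀ ℕ)
    (hc : 0 < f.coeff p)
    (n : Fin d → ℝ) (c : ℝ)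
    (hsep1 : (∑ j, n j * (p j : ℝ)) > c)
    (hsep2 : ∀ q ∈ f.support, q ≠ p → (∑ j, n j * (q j : ℝ)) < c) :
    ∃ q : Fin d → ℚ, (∀ i, 0 < q i) ∧
      0 < MvPolynomial.eval q (f.map (Int.castRingHom ℚ)) := by
  obtain ⟨m, hm⟩ := exists_int_dotProduct_lt
    ((f.support.erase p).finite_toSet.image fun a j => (a j : ℝ))
    (p := fun j => p j) (n := n) (by
      rintro _ ⟨a, ha, rfl⟩
      obtain ⟨hap, haf⟩ := Finset.mem_erase.1 ha
      exact (hsep2 a haf hap).trans hsep1)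
  set T : ℚ := 1 + ∑ a ∈ f.support.erase p, |((f.coeff a : ℤ) : ℚ)|
  have hT : 1 ≤ T := le_add_of_nonneg_right (Finset.sum_nonneg fun _ _ => abs_nonneg _)
  have hT0 : 0 < T := one_pos.trans_le hT
  refine ⟨fun i => T ^ m i, fun i => zpow_pos hT0 _, ?_⟩
  rw [eval_map, eval₂_zpow_eq_sum _ _ hT0.ne']
  refine sum_mul_zpow_pos_of_dominant (mem_support_iff.2 hc.ne')
    (by rw [eq_intCast]; exact_mod_cast hc) (fun a ha hap => ?_) hT (by simp [T])
  have hma := hm _ ⟨a, Finset.mem_erase.2 ⟨hap, ha⟩, rfl⟩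
  simp only [dotProduct] at hma
  exact_mod_cast hma

/-- If some nonzero exponent vector `p` in the support of `f` has positive
coefficient and can be strictly separated by a hyperplane from the rest of the
support (normal pointing toward `p`), then `f` takes a positive value at some
point with all coordinates positive rationals. -/
theorem stmt_7 {d : ℕ} (f : MvPolynomial (Fin d) ℤ) (p : Fin d →₀ ℕ)
    (hp : p ∈ f.support) (hp0 : p ≠ 0) (hc : 0 < f.coeff p)
    (n : Fin d → ℝ) (c : ℝ)
    (hsep1 : (∑ j, n j * (p j : ℝ)) > c)
    (hsep2 : ∀ q ∈ f.support, q ≠ p → (∑ j, n j * (q j : ℝ)) < c) :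
    ∃ q : Fin d → ℚ, (∀ i, 0 < q i) ∧
      0 < MvPolynomial.eval q (f.map (Int.castRingHom ℚ)) :=
  stmt_7_general f p hc n c hsep1 hsep2
end

section
/- Let f ∈ ℤ[x₁,…,x_d] be nonconstant with support {p₁,…,p_s} and coefficients c₁,…,c_s, where c₁ < 0. Suppose n ∈ ℝ^d and c ∈ ℝ satisfy n·p₁ − c ≥ 1 and n·p_i − c ≤ −1 for i ∈ {2,…,s}, and suppose the μ-th coordinate of p₁ is odd for some μ ∈ {1,…,d}. Define, for a natural number a ≥ 2, the point t(a) ∈ ℝ^d by t(a)_j = a^{n_j} for j ≠ μ and t(a)_μ = −a^{n_μ}. Then there exists a₀ ∈ ℕ such that for all a ≥ a₀, sign(f(t(a))) = −sign(c₁) = 1; in particular f(t(a)) > 0. -/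
private lemma rpow_sum_aux {x : ℝ} (hx : 0 < x) {ι : Type*} (s : Finset ι) (f : ι → ℝ) :
    x ^ (∑ j ∈ s, f j) = ∏ j ∈ s, x ^ f j := by
  induction s using Finset.cons_induction with
  | empty => simp
  | cons a s ha ih => rw [Finset.sum_cons, Finset.prod_cons, Real.rpow_add hx, ih]


/-- Lemma 5: with `c 0 < 0`, separation hypotheses, and the `μ`-th coordinate
of `p 0` odd, flipping the sign of the `μ`-th coordinate of the point
`(a^{n₁},…,a^{n_d})` yields, for all sufficiently large naturals `a`, a point
where `f = Σ_i c_i · Π_j x_j^{p i j}` is positive, with sign `1 = −sign(c 0)`. -/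
theorem stmt_12 {d s : ℕ} (hs : 1 ≤ s) (p : Fin s → Fin d → ℕ) (co : Fin s → ℤ)
    (hinj : Function.Injective p) (hco : ∀ i, co i ≠ 0)
    (hnonconst : ∃ i, p i ≠ 0)
    (hc0 : co ⟨0, hs⟩ < 0)
    (μ : Fin d) (hodd : Odd (p ⟨0, hs⟩ μ))
    (n : Fin d → ℝ) (c : ℝ)
    (h1 : (∑ j, n j * (p ⟨0, hs⟩ j : ℝ)) - c ≥ 1)
    (h2 : ∀ i : Fin s, i ≠ ⟨0, hs⟩ → (∑ j, n j * (p i j : ℝ)) - c ≤ -1)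
    (t : ℕ → Fin d → ℝ)
    (ht : ∀ a : ℕ, ∀ j : Fin d,
      t a j = if j = μ then -((a : ℝ) ^ (n j)) else (a : ℝ) ^ (n j)) :
    ∃ a₀ : ℕ, ∀ a : ℕ, a₀ ≤ a →
      Real.sign (∑ i, (co i : ℝ) * ∏ j, (t a j) ^ (p i j)) = 1 ∧
      0 < ∑ i, (co i : ℝ) * ∏ j, (t a j) ^ (p i j) := by
  set i0 : Fin s := ⟨0, hs⟩ with hi0
  set C : ℝ := ∑ i, |(co i : ℝ)| with hC
  have hC0 : 0 ≤ C := Finset.sum_nonneg fun i _ => abs_nonneg _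
  refine ⟨⌈C⌉₊ + 2, fun a haa => ?_⟩
  have ha1 : (1:ℝ) ≤ (a:ℝ) := by
    have : 1 ≤ a := by omega
    exact_mod_cast this
  have ha0 : (0:ℝ) < (a:ℝ) := lt_of_lt_of_le one_pos ha1
  have haC : C < (a:ℝ) := by
    have h1' : C ≤ (⌈C⌉₊ : ℝ) := Nat.le_ceil C
    have h2' : ((⌈C⌉₊ + 2 : ℕ) : ℝ) ≤ (a:ℝ) := by exact_mod_cast haa
    push_cast at h2'
    linarith
  set N : Fin s → ℝ := fun i => ∑ j, n j * (p i j : ℝ) with hN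
  have key : ∀ i : Fin s,
      ∏ j, (t a j) ^ (p i j) = (-1:ℝ) ^ (p i μ) * (a:ℝ) ^ (N i) := by
    intro i
    have hstep : ∀ j : Fin d, (t a j) ^ (p i j)
        = (if j = μ then (-1:ℝ) ^ (p i j) else 1) * (a:ℝ) ^ (n j * (p i j : ℝ)) := by
      intro j
      rw [ht a j]
      split_ifs with h
      · rw [neg_pow, ← Real.rpow_natCast ((a:ℝ) ^ (n j)) (p i j),
          ← Real.rpow_mul ha0.le]
      · rw [← Real.rpow_natCast ((a:ℝ) ^ (n j)) (p i j), ← Real.rpow_mul ha0.le,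
          one_mul]
    rw [Finset.prod_congr rfl (fun j _ => hstep j), Finset.prod_mul_distrib]
    congr 1
    · simp
    · rw [hN, rpow_sum_aux ha0]
  have keyS : (∑ i, (co i : ℝ) * ∏ j, (t a j) ^ (p i j))
      = ∑ i, (co i : ℝ) * ((-1:ℝ) ^ (p i μ) * (a:ℝ) ^ (N i)) := by
    refine Finset.sum_congr rfl fun i _ => by rw [key i]
  have hmain : 0 < ∑ i, (co i : ℝ) * ∏ j, (t a j) ^ (p i j) := by
    rw [keyS]
    rw [← Finset.add_sum_erase Finset.univ _ (Finset.mem_univ i0)]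
    have hterm0 : (a:ℝ) ^ (c + 1) ≤ (co i0 : ℝ) * ((-1:ℝ) ^ (p i0 μ) * (a:ℝ) ^ (N i0)) := by
      rw [hodd.neg_one_pow]
      have hc1 : (-(co i0 : ℝ)) ≥ 1 := by
        have : co i0 ≤ -1 := by omega
        have : (co i0 : ℝ) ≤ -1 := by exact_mod_cast this
        linarith
      have hexp : (a:ℝ) ^ (c + 1) ≤ (a:ℝ) ^ (N i0) :=
        Real.rpow_le_rpow_of_exponent_le ha1 (by linarith [h1])
      have hpos : (0:ℝ) < (a:ℝ) ^ (N i0) := Real.rpow_pos_of_pos ha0 _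
      calc (a:ℝ) ^ (c + 1) ≤ (a:ℝ) ^ (N i0) := hexp
        _ ≤ (-(co i0 : ℝ)) * (a:ℝ) ^ (N i0) := le_mul_of_one_le_left hpos.le hc1
        _ = (co i0 : ℝ) * (-1 * (a:ℝ) ^ (N i0)) := by ring
    have hrest : -(C * (a:ℝ) ^ (c - 1)) ≤
        ∑ i ∈ Finset.univ.erase i0, (co i : ℝ) * ((-1:ℝ) ^ (p i μ) * (a:ℝ) ^ (N i)) := by
      have hCe : ∑ i ∈ Finset.univ.erase i0, |(co i : ℝ)| ≤ C := by
        rw [hC]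
        exact Finset.sum_le_sum_of_subset_of_nonneg (Finset.erase_subset _ _)
          (fun i _ _ => abs_nonneg _)
      have hbound : ∀ i ∈ Finset.univ.erase i0,
          -(|(co i : ℝ)| * (a:ℝ) ^ (c - 1)) ≤ (co i : ℝ) * ((-1:ℝ) ^ (p i μ) * (a:ℝ) ^ (N i)) := by
        intro i hi
        have hine : i ≠ i0 := Finset.ne_of_mem_erase hi
        have hNi : N i ≤ c - 1 := by linarith [h2 i hine]
        have hexp : (a:ℝ) ^ (N i) ≤ (a:ℝ) ^ (c - 1) :=
          Real.rpow_le_rpow_of_exponent_le ha1 hNi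
        have h3 : |(co i : ℝ) * ((-1:ℝ) ^ (p i μ) * (a:ℝ) ^ (N i))|
            = |(co i : ℝ)| * (a:ℝ) ^ (N i) := by
          rw [abs_mul, abs_mul, abs_pow, abs_neg, abs_one, one_pow, one_mul,
            abs_of_nonneg (Real.rpow_pos_of_pos ha0 _).le]
        have h4 := neg_abs_le ((co i : ℝ) * ((-1:ℝ) ^ (p i μ) * (a:ℝ) ^ (N i)))
        rw [h3] at h4
        have h5 : |(co i : ℝ)| * (a:ℝ) ^ (N i) ≤ |(co i : ℝ)| * (a:ℝ) ^ (c - 1) :=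
          mul_le_mul_of_nonneg_left hexp (abs_nonneg _)
        linarith
      calc -(C * (a:ℝ) ^ (c - 1))
          ≤ -((∑ i ∈ Finset.univ.erase i0, |(co i : ℝ)|) * (a:ℝ) ^ (c - 1)) := by
            have := mul_le_mul_of_nonneg_right hCe (Real.rpow_pos_of_pos ha0 (c-1)).le
            linarith
        _ = ∑ i ∈ Finset.univ.erase i0, -(|(co i : ℝ)| * (a:ℝ) ^ (c - 1)) := by
            rw [Finset.sum_mul, ← Finset.sum_neg_distrib]
        _ ≤ _ := Finset.sum_le_sum hbound
    have hfinal : 0 < (a:ℝ) ^ (c + 1) - C * (a:ℝ) ^ (c - 1) := by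
      have heq : (a:ℝ) ^ (c + 1) = (a:ℝ) ^ (c - 1) * (a:ℝ) ^ (2:ℝ) := by
        rw [← Real.rpow_add ha0]; ring_nf
      have h2a : C < (a:ℝ) ^ (2:ℝ) := by
        have hsq : (a:ℝ) ^ (2:ℝ) = (a:ℝ) * (a:ℝ) := by
          rw [show (2:ℝ) = 1 + 1 by norm_num, Real.rpow_add ha0, Real.rpow_one]
        have hle : (a:ℝ) ≤ (a:ℝ) * (a:ℝ) := le_mul_of_one_le_left ha0.le ha1
        rw [hsq]; linarith
      have hp : (0:ℝ) < (a:ℝ) ^ (c - 1) := Real.rpow_pos_of_pos ha0 _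
      rw [heq]
      nlinarith
    linarith
  exact ⟨Real.sign_of_pos hmain, hmain⟩
end

section
/- Let f ∈ ℤ[x₁,…,x_d] and suppose there exists a nonzero exponent vector p in the support of f such that the coefficient of x^p is negative, p has at least one odd coordinate, and p can be strictly separated by a hyperplane from the rest of the support of f with the normal vector pointing toward p. Then there exists a point q ∈ ℚ^d (with exactly one negative coordinate and the rest positive) such that f(q) > 0. -/
/-!
Move the strict separation of `p` to an integer direction `a` (the separating directions form an
open cone, so they contain a lattice point), and evaluate `f` at `q_j = ± M ^ a_j` with the minus
sign at an odd coordinate `μ` of `p`. The monomial `x^v` becomes `± M ^ ⟨a, v⟩`, the monomial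
`x^p` has the strictly largest exponent and, because `p μ` is odd, a positive coefficient
`-f_p ≥ 1`; once `M` exceeds the sum of the remaining coefficients' absolute values it dominates.
-/

open MvPolynomial

theorem Finset.prod_zpow_eq_zpow_sum₀ {ι G₀ : Type*} [CommGroupWithZero G₀] {M : G₀}
    (hM : M ≠ 0) (s : Finset ι) (e : ι → ℤ) : ∏ j ∈ s, M ^ e j = M ^ ∑ j ∈ s, e j := by
  induction s using Finset.cons_induction with
  | empty => simp
  | cons j s hj ih => rw [Finset.prod_cons, Finset.sum_cons, zpow_add₀ hM, ih]

section IntegerPoints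

variable {ι : Type*} [Fintype ι]

theorem exists_intCast_mem_of_isOpen_of_smul_mem {U : Set (ι → ℝ)} (hU : IsOpen U)
    (hcone : ∀ x ∈ U, ∀ t : ℝ, 0 < t → t • x ∈ U) (hne : U.Nonempty) :
    ∃ z : ι → ℤ, (fun j => (z j : ℝ)) ∈ U := by
  obtain ⟨x, hx⟩ := hne
  obtain ⟨ε, hε, hball⟩ := Metric.isOpen_iff.1 hU x hx
  -- `ε • round (x / ε)` is within `ε / 2` of `x` in the sup metric.
  set z : ι → ℤ := fun j => round (x j / ε)
  have hclose : ε • (fun j => (z j : ℝ)) ∈ U := by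
    refine hball ((dist_pi_lt_iff hε).2 fun j => ?_)
    have hround := abs_sub_round (x j / ε)
    rw [Real.dist_eq, Pi.smul_apply, smul_eq_mul, abs_sub_comm,
      show x j - ε * z j = ε * (x j / ε - z j) by field_simp, abs_mul, abs_of_pos hε]
    nlinarith
  refine ⟨z, ?_⟩
  simpa [smul_smul, inv_mul_cancel₀ hε.ne'] using hcone _ hclose ε⁻¹ (inv_pos.2 hε)

theorem exists_int_forall_pos_of_real {κ : Type*} (s : Finset κ) (w : κ → ι → ℝ) (n : ι → ℝ)
    (hn : ∀ k ∈ s, 0 < ∑ j, n j * w k j) :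
    ∃ z : ι → ℤ, ∀ k ∈ s, 0 < ∑ j, (z j : ℝ) * w k j := by
  set U : Set (ι → ℝ) := ⋂ k ∈ s, {x | 0 < ∑ j, x j * w k j}
  have hU : IsOpen U := isOpen_biInter_finset fun k _ => isOpen_lt (by fun_prop) (by fun_prop)
  have hcone : ∀ x ∈ U, ∀ t : ℝ, 0 < t → t • x ∈ U := by
    intro x hx t ht
    simp only [U, Set.mem_iInter, Set.mem_ofPred_eq, Pi.smul_apply, smul_eq_mul, mul_assoc,
      ← Finset.mul_sum] at hx ⊢
    exact fun k hk => mul_pos ht (hx k hk)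
  obtain ⟨z, hz⟩ := exists_intCast_mem_of_isOpen_of_smul_mem hU hcone ⟨n, by simpa [U] using hn⟩
  exact ⟨z, by simpa [U] using hz⟩

end IntegerPoints

theorem sum_mul_zpow_pos_of_dominant_s13 {α σ : Type*} [DecidableEq σ] [Field α] [LinearOrder α]
    [IsStrictOrderedRing α] {S : Finset σ} {p : σ} (hp : p ∈ S) {c : σ → α} {A : σ → ℤ}
    (hcp : 1 ≤ c p) (hA : ∀ v ∈ S, v ≠ p → A v < A p) {M : α}
    (hM : 1 + ∑ v ∈ S.erase p, |c v| ≤ M) :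
    0 < ∑ v ∈ S, c v * M ^ A v := by
  have hM1 : 1 ≤ M :=
    le_trans (le_add_of_nonneg_right (Finset.sum_nonneg fun _ _ => abs_nonneg _)) hM
  have hM0 : 0 < M := by linarith
  set B := M ^ (A p - 1)
  have hB : 0 < B := zpow_pos hM0 _
  have hmain : M * B ≤ c p * M ^ A p := by
    rw [← zpow_one_add₀ hM0.ne', add_sub_cancel]
    exact le_mul_of_one_le_left (zpow_pos hM0 _).le hcp
  have hrest : ∀ v ∈ S.erase p, -(|c v| * B) ≤ c v * M ^ A v := by
    intro v hv
    have hle : M ^ A v ≤ B :=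
      zpow_le_zpow_right₀ hM1 (Int.le_sub_one_of_lt (hA v (Finset.mem_of_mem_erase hv)
        (Finset.ne_of_mem_erase hv)))
    have hpos : 0 < M ^ A v := zpow_pos hM0 _
    calc -(|c v| * B) ≤ -(|c v| * M ^ A v) := neg_le_neg (by gcongr)
      _ = -|c v * M ^ A v| := by rw [abs_mul, abs_of_pos hpos]
      _ ≤ c v * M ^ A v := neg_abs_le _
  have hsum := Finset.sum_le_sum hrest
  rw [Finset.sum_neg_distrib, ← Finset.sum_mul] at hsum
  rw [← Finset.add_sum_erase S _ hp]
  nlinarith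

theorem MvPolynomial.eval_neg_one_mul_zpow {σ K : Type*} [Fintype σ] [DecidableEq σ] [Field K]
    (f : MvPolynomial σ K) (μ : σ) (a : σ → ℤ) {M : K} (hM : M ≠ 0) :
    eval (fun j => (if j = μ then -1 else 1) * M ^ a j) f =
      ∑ v ∈ f.support, f.coeff v * (-1) ^ v μ * M ^ ∑ j, a j * (v j : ℤ) := by
  rw [eval_eq']
  refine Finset.sum_congr rfl fun v _ => ?_
  have hmon : ∏ j, (M ^ a j) ^ v j = M ^ ∑ j, a j * (v j : ℤ) := by
    simp_rw [← zpow_natCast, ← zpow_mul, Finset.prod_zpow_eq_zpow_sum₀ hM]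
  simp only [mul_pow, Finset.prod_mul_distrib, hmon, ite_pow, one_pow, Finset.prod_ite_eq',
    Finset.mem_univ, if_true, mul_assoc]

theorem stmt_13_general {d : ℕ} (f : MvPolynomial (Fin d) ℤ) (p : Fin d →₀ ℕ)
    (hp : p ∈ f.support) (hc : f.coeff p < 0)
    (μ : Fin d) (hodd : Odd (p μ))
    (n : Fin d → ℝ) (c : ℝ)
    (hsep1 : (∑ j, n j * (p j : ℝ)) > c)
    (hsep2 : ∀ q ∈ f.support, q ≠ p → (∑ j, n j * (q j : ℝ)) < c) :
    ∃ q : Fin d → ℚ, ∃ ν : Fin d, q ν < 0 ∧ (∀ i, i ≠ ν → 0 < q i) ∧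
      0 < MvPolynomial.eval q (f.map (Int.castRingHom ℚ)) := by
  classical
  obtain ⟨a, ha⟩ := exists_int_forall_pos_of_real (f.support.erase p)
    (fun v j => (p j : ℝ) - v j) n fun v hv => by
      have := hsep2 v (Finset.mem_of_mem_erase hv) (Finset.ne_of_mem_erase hv)
      simp only [mul_sub, Finset.sum_sub_distrib]
      linarith
  have hA : ∀ v ∈ f.support, v ≠ p → ∑ j, a j * (v j : ℤ) < ∑ j, a j * (p j : ℤ) := by
    intro v hv hvp
    have := ha v (Finset.mem_erase.2 ⟨hvp, hv⟩)
    simp only [mul_sub, Finset.sum_sub_distrib, sub_pos] at this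
    exact_mod_cast this
  set M : ℚ := 1 + ∑ v ∈ f.support.erase p, |((f.coeff v : ℤ) : ℚ)|
  have hM : 0 < M := by positivity
  refine ⟨fun j => (if j = μ then -1 else 1) * M ^ a j, μ, by simpa using zpow_pos hM (a μ),
    fun i hi => by simpa [hi] using zpow_pos hM (a i), ?_⟩
  rw [eval_neg_one_mul_zpow _ μ a hM.ne', support_map_of_injective _ Int.cast_injective]
  refine sum_mul_zpow_pos_of_dominant_s13 hp ?_ hA ?_
  · have : ((f.coeff p : ℤ) : ℚ) ≤ -1 := by exact_mod_cast Int.le_sub_one_of_lt hc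
    simp only [coeff_map, eq_intCast, hodd.neg_one_pow]
    linarith
  · simp [coeff_map, abs_mul, M]

/-- Generalization to weakly negative support points: if a nonzero exponent
vector `p` in the support of `f` has negative coefficient, at least one odd
coordinate, and is strictly separated by a hyperplane from the rest of the
support, then `f` is positive at some rational point having exactly one
negative coordinate and all other coordinates positive. -/
theorem stmt_13 {d : ℕ} (f : MvPolynomial (Fin d) ℤ) (p : Fin d →₀ ℕ)
    (hp : p ∈ f.support) (hp0 : p ≠ 0) (hc : f.coeff p < 0)
    (μ : Fin d) (hodd : Odd (p μ))
    (n : Fin d → ℝ) (c : ℝ)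
    (hsep1 : (∑ j, n j * (p j : ℝ)) > c)
    (hsep2 : ∀ q ∈ f.support, q ≠ p → (∑ j, n j * (q j : ℝ)) < c) :
    ∃ q : Fin d → ℚ, ∃ ν : Fin d, q ν < 0 ∧ (∀ i, i ≠ ν → 0 < q i) ∧
      0 < MvPolynomial.eval q (f.map (Int.castRingHom ℚ)) :=
  stmt_13_general f p hp hc μ hodd n c hsep1 hsep2
end
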